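/- arXiv:math/0703836 — 5 statements merged into one kernel-verified Lean document; each statement's English description precedes it below -/
import Mathlib

section
/- Let C be an LD-set for Q and ν, ν' two probability measures on (X,𝒳). For any integer n and nonnegative measurable functions g_0,…,g_n on X such that E^Q_ν[∏_{i=0}^n g_i(X_i)] < ∞ and E^Q_{ν'}[∏_{i=0}^n g_i(X_i)] < ∞, define Δ_n(ν,ν',{g_i}) := sup_{A∈𝒳} | E^{Q̄}_{ν⊗ν'}[∏_{i=0}^n ḡ_i(X_i,X'_i) 1_A(X_n)] − E^{Q̄}_{ν'⊗ν}[∏_{i=0}^n ḡ_i(X_i,X'_i) 1_A(X_n)] |, where ḡ_i(x,x') := g_i(x) g_i(x'). Then Δ_n(ν,ν',{g_i}) ≤ E^{Q̄}_{ν⊗ν'}[ ∏_{i=0}^n ḡ_i(X_i,X'_i) · ρ_C^{N_{C,n}} ], where N_{C,n} := Σ_{i=0}^{n−1} 1_{C×C}(X_i,X'_i) 1_{C×C}(X_{i+1},X'_{i+1}) and ρ_C := 1 − (ε⁻_C/ε⁺_C)². -/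
open MeasureTheory ProbabilityTheory
open scoped ENNReal

/-- A set `C` is a local Doeblin (LD) set for the kernel `Q`, with minorizing/majorizing
measure `lam` and constants `em, ep`. -/
def IsLDSet {X : Type*} [MeasurableSpace X] (Q : Kernel X X) (C : Set X)
    (lam : Measure X) (em ep : ℝ) : Prop :=
  MeasurableSet C ∧ 0 < lam C ∧ 0 < em ∧ 0 < ep ∧
    ∀ x ∈ C, ∀ A : Set X, MeasurableSet A →
      ENNReal.ofReal em * lam (A ∩ C) ≤ Q x (A ∩ C) ∧
        Q x (A ∩ C) ≤ ENNReal.ofReal ep * lam (A ∩ C)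

/-- The law of the Markov chain with kernel `Q` and initial distribution `ν`, realized as a
measure on `ℕ → X`: `pathMeasure Q ν n` carries the joint law of the first `n+1`
coordinates (coordinates beyond `n` are frozen copies). -/
noncomputable def pathMeasure {X : Type*} [MeasurableSpace X] (Q : Kernel X X)
    (ν : Measure X) : ℕ → Measure (ℕ → X)
  | 0 => ν.map (fun x _ => x)
  | n + 1 => (pathMeasure Q ν n).bind
      (fun ω => (Q (ω n)).map (fun x' => Function.update ω (n + 1) x'))

/-- The product kernel `Q̄` on `X × X`, `Q̄[(x,x'), A×A'] = Q(x,A) Q(x',A')`. -/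
noncomputable def prodKernel {X : Type*} [MeasurableSpace X] (Q : Kernel X X) :
    Kernel (X × X) (X × X) :=
  (Q.comap Prod.fst measurable_fst).prod (Q.comap Prod.snd measurable_snd)

/-- The number of consecutive joint visits to `C × C` before time `n` along a path `ω`. -/
noncomputable def jointVisits {X : Type*} (C : Set X) (n : ℕ) (ω : ℕ → X × X) : ℕ :=
  ∑ i ∈ Finset.range n,
    (C ×ˢ C).indicator (fun _ => 1) (ω i) * (C ×ˢ C).indicator (fun _ => 1) (ω (i + 1))


/-!
Write `ḡᵢ(z) = gᵢ(z.1) gᵢ(z.2)`, so that the chain started at `ν' ⊗ ν` is the swap of the chain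
started at `ν ⊗ ν'` and the weights are swap-invariant. Both one-sided differences are then
instances of a single inequality: if `p ≤ p ∘ swap + G` pointwise, then
`E[∏_{i<n} ḡᵢ(X̄ᵢ) p(X̄ₙ)] ≤ E[∏_{i<n} ḡᵢ(X̄ᵢ) p(swap X̄ₙ)] + E[∏_{i<n} ḡᵢ(X̄ᵢ) ρ^{N} G(X̄ₙ)]`,
applied to `p = ḡₙ · 1_A(x)` and to `p ∘ swap`, with `G = ḡₙ`.

The inequality is proved by backward induction: integrating out the last step replaces `(p, G)`
by a pair with the same property. From a point of `C × C`, the minorization gives the common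
part `ε⁻ λ_C` of `Q(x, ·)` and `Q(x', ·)` on `C`, so `Q̄((x, x'), ·)` restricted to `C × C`
splits into the swap-invariant measure `(ε⁻ λ_C) ⊗ (ε⁻ λ_C)`, on which `p` and `p ∘ swap`
integrate alike, and a remainder which the majorization bounds by `ρ_C` times the whole.
-/

open Finset Function

section PathMeasure

variable {Y Z : Type*} [MeasurableSpace Y] [MeasurableSpace Z]

lemma measurable_pathMeasure_step (κ : Kernel Y Y) [IsSFiniteKernel κ] (n : ℕ) :
    Measurable fun ω : ℕ → Y => (κ (ω n)).map (update ω (n + 1)) := by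
  refine Measure.measurable_of_measurable_coe _ fun s hs => ?_
  simp_rw [Measure.map_apply (measurable_update _) hs]
  exact Kernel.measurable_kernel_prodMk_left (κ := κ.comap (· n) (measurable_pi_apply n))
    (measurable_update' hs)

lemma measurable_lintegral_update (κ : Kernel Y Y) [IsSFiniteKernel κ] (n : ℕ)
    {F : (ℕ → Y) → ℝ≥0∞} (hF : Measurable F) :
    Measurable fun ω : ℕ → Y => ∫⁻ y, F (update ω (n + 1) y) ∂κ (ω n) :=
  Measurable.lintegral_kernel_prod_right' (κ := κ.comap (· n) (measurable_pi_apply n))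
    (f := fun q => F (update q.1 (n + 1) q.2)) (hF.comp measurable_update')

lemma lintegral_pathMeasure_succ (κ : Kernel Y Y) [IsSFiniteKernel κ] (μ : Measure Y) (n : ℕ)
    {F : (ℕ → Y) → ℝ≥0∞} (hF : Measurable F) :
    ∫⁻ ω, F ω ∂pathMeasure κ μ (n + 1)
      = ∫⁻ ω, ∫⁻ y, F (update ω (n + 1) y) ∂κ (ω n) ∂pathMeasure κ μ n := by
  rw [pathMeasure, Measure.lintegral_bind (measurable_pathMeasure_step κ n).aemeasurable
    hF.aemeasurable]
  simp_rw [lintegral_map hF (measurable_update _)]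

lemma lintegral_prod_mul_pathMeasure_succ (κ : Kernel Y Y) [IsSFiniteKernel κ] (μ : Measure Y)
    (n : ℕ) {w : ℕ → Y × Y → ℝ≥0∞} (hw : ∀ i, Measurable (w i)) {f : Y → ℝ≥0∞}
    (hf : Measurable f) :
    ∫⁻ ω, (∏ i ∈ range (n + 1), w i (ω i, ω (i + 1))) * f (ω (n + 1)) ∂pathMeasure κ μ (n + 1)
      = ∫⁻ ω, (∏ i ∈ range n, w i (ω i, ω (i + 1))) * ∫⁻ y, w n (ω n, y) * f y ∂κ (ω n)
          ∂pathMeasure κ μ n := by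
  rw [lintegral_pathMeasure_succ κ μ n (by fun_prop)]
  refine lintegral_congr fun ω => ?_
  rw [← lintegral_const_mul _ (by fun_prop)]
  refine lintegral_congr fun y => ?_
  have hupd : ∀ i < n + 1, update ω (n + 1) y i = ω i := fun i hi => update_of_ne hi.ne _ _
  rw [prod_range_succ, prod_congr rfl fun i hi => by
    rw [hupd i (by simp at hi; omega), hupd (i + 1) (by simp at hi; omega)],
    hupd n n.lt_succ_self, update_self, mul_assoc]

lemma pathMeasure_map (κ : Kernel Y Y) (η : Kernel Z Z) [IsSFiniteKernel κ] [IsSFiniteKernel η]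
    {f : Y → Z} (hf : Measurable f) (hκη : ∀ y, η (f y) = (κ y).map f) (μ : Measure Y) (n : ℕ) :
    pathMeasure η (μ.map f) n = (pathMeasure κ μ n).map (f ∘ ·) := by
  have hfω : Measurable fun ω : ℕ → Y => f ∘ ω := by fun_prop
  induction n with
  | zero =>
    rw [pathMeasure, pathMeasure, Measure.map_map (by fun_prop) hf,
      Measure.map_map hfω (by fun_prop)]
    rfl
  | succ n ih =>
    refine Measure.ext_of_lintegral _ fun F hF => ?_
    rw [lintegral_pathMeasure_succ _ _ _ hF, ih,
      lintegral_map (measurable_lintegral_update η n hF) hfω, lintegral_map hF hfω,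
      lintegral_pathMeasure_succ (F := fun ω => F (f ∘ ω)) _ _ _ (hF.comp hfω)]
    refine lintegral_congr fun ω => ?_
    rw [comp_apply, hκη, lintegral_map (f := fun z => F (update (f ∘ ω) (n + 1) z))
      (hF.comp (measurable_update _)) hf]
    simp only [comp_update]

end PathMeasure

section ProductChain

variable {X : Type*} [MeasurableSpace X]

instance (Q : Kernel X X) [IsSFiniteKernel Q] : IsSFiniteKernel (prodKernel Q) := by
  unfold prodKernel; infer_instance

lemma prodKernel_apply (Q : Kernel X X) [IsSFiniteKernel Q] (z : X × X) :
    prodKernel Q z = (Q z.1).prod (Q z.2) := by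
  rw [prodKernel, Kernel.prod_apply, Kernel.comap_apply, Kernel.comap_apply]

lemma prodKernel_apply_swap (Q : Kernel X X) [IsSFiniteKernel Q] (z : X × X) :
    prodKernel Q z.swap = (prodKernel Q z).map Prod.swap := by
  rw [prodKernel_apply, prodKernel_apply, Measure.prod_swap, Prod.fst_swap, Prod.snd_swap]

lemma lintegral_prod_mul_pathMeasure_prodKernel_swap (Q : Kernel X X) [IsSFiniteKernel Q]
    (ν ν' : Measure X) [SFinite ν] [SFinite ν'] {h : ℕ → X × X → ℝ≥0∞}
    (hh : ∀ i, Measurable (h i)) (hsymm : ∀ i z, h i z.swap = h i z) (s : Finset ℕ) (n : ℕ)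
    {f : X × X → ℝ≥0∞} (hf : Measurable f) :
    ∫⁻ ω, (∏ i ∈ s, h i (ω i)) * f (ω n) ∂pathMeasure (prodKernel Q) (ν'.prod ν) n
      = ∫⁻ ω, (∏ i ∈ s, h i (ω i)) * f (ω n).swap ∂pathMeasure (prodKernel Q) (ν.prod ν') n := by
  rw [← Measure.prod_swap, pathMeasure_map _ _ measurable_swap (prodKernel_apply_swap Q),
    lintegral_map (by fun_prop) (by fun_prop)]
  simp only [comp_apply, hsymm]

noncomputable def jointVisitIndicator (C : Set X) (z z' : X × X) : ℕ :=
  (C ×ˢ C).indicator (fun _ => 1) z * (C ×ˢ C).indicator (fun _ => 1) z'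

@[fun_prop]
lemma measurable_jointVisitIndicator {C : Set X} (hC : MeasurableSet C) :
    Measurable fun q : (X × X) × (X × X) => jointVisitIndicator C q.1 q.2 := by
  have : Measurable ((C ×ˢ C).indicator fun _ => 1 : X × X → ℕ) :=
    measurable_const.indicator (hC.prod hC)
  exact (this.comp measurable_fst).mul (this.comp measurable_snd)

end ProductChain

section Coupling

variable {X : Type*} [MeasurableSpace X]

/-- On the swap-invariant part `m`, `p` and `p ∘ swap` have the same integral. -/
lemma lintegral_add_le_lintegral_swap_add {r m : Measure (X × X)} (hm : m.map Prod.swap = m)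
    {p G : X × X → ℝ≥0∞} (hG : Measurable G) (hpG : ∀ z, p z ≤ p z.swap + G z) :
    ∫⁻ z, p z ∂(r + m) ≤ ∫⁻ z, p z.swap ∂(r + m) + ∫⁻ z, G z ∂r := by
  have hm_swap : ∫⁻ z, p z ∂m = ∫⁻ z, p z.swap ∂m := by
    conv_lhs => rw [← hm]
    exact lintegral_map_equiv p MeasurableEquiv.prodComm
  have hr : ∫⁻ z, p z ∂r ≤ ∫⁻ z, p z.swap ∂r + ∫⁻ z, G z ∂r :=
    (lintegral_mono hpG).trans_eq (lintegral_add_right _ hG)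
  rw [lintegral_add_measure, lintegral_add_measure, hm_swap]
  calc _ ≤ (∫⁻ z, p z.swap ∂r + ∫⁻ z, G z ∂r) + ∫⁻ z, p z.swap ∂m := by gcongr
    _ = _ := by ring

/-- The common minorant `ν` of `μ₁` and `μ₂` yields the swap-invariant part `ν ⊗ ν` of
`μ₁ ⊗ μ₂`, and `c • μᵢ ≤ ν` bounds the remainder by `(1 - c²) • μ₁ ⊗ μ₂`. -/
lemma MeasureTheory.Measure.exists_prod_eq_add_swap_invariant {μ₁ μ₂ ν : Measure X}
    [IsFiniteMeasure μ₁] [IsFiniteMeasure μ₂] {c ρ : ℝ≥0∞} (h₁ : ν ≤ μ₁) (h₂ : ν ≤ μ₂)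
    (hc₁ : c • μ₁ ≤ ν) (hc₂ : c • μ₂ ≤ ν) (hρ : 1 ≤ ρ + c ^ 2) :
    ∃ r m : Measure (X × X), μ₁.prod μ₂ = r + m ∧ m.map Prod.swap = m ∧ r ≤ ρ • μ₁.prod μ₂ := by
  have : IsFiniteMeasure ν := isFiniteMeasure_of_le μ₁ h₁
  have hle : ν.prod ν ≤ μ₁.prod μ₂ := Measure.prod_mono h₁ h₂
  have hc : c ^ 2 • μ₁.prod μ₂ ≤ ν.prod ν := by
    rw [sq, mul_smul, ← Measure.prod_smul_left, ← Measure.prod_smul_right]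
    exact Measure.prod_mono hc₁ hc₂
  refine ⟨μ₁.prod μ₂ - ν.prod ν, ν.prod ν, (Measure.sub_add_cancel_of_le hle).symm,
    Measure.prod_swap, Measure.le_iff.2 fun s hs => ?_⟩
  rw [Measure.sub_apply hs hle, tsub_le_iff_right, Measure.smul_apply, smul_eq_mul]
  calc μ₁.prod μ₂ s ≤ (ρ + c ^ 2) * μ₁.prod μ₂ s := le_mul_of_one_le_left' hρ
    _ = ρ * μ₁.prod μ₂ s + (c ^ 2 • μ₁.prod μ₂) s := add_mul _ _ _
    _ ≤ ρ * μ₁.prod μ₂ s + ν.prod ν s := by gcongr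

end Coupling

section LocalDoeblin

variable {X : Type*} [MeasurableSpace X] {Q : Kernel X X} {C : Set X} {lam : Measure X}
  {em ep : ℝ}

lemma IsLDSet.smul_restrict_le (hC : IsLDSet Q C lam em ep) {x : X} (hx : x ∈ C) :
    ENNReal.ofReal em • lam.restrict C ≤ (Q x).restrict C :=
  Measure.le_iff.2 fun s hs => by
    simpa only [Measure.smul_apply, smul_eq_mul, Measure.restrict_apply hs] using
      (hC.2.2.2.2 x hx s hs).1

lemma IsLDSet.smul_restrict_le_smul (hC : IsLDSet Q C lam em ep) {x : X} (hx : x ∈ C) :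
    ENNReal.ofReal (em / ep) • (Q x).restrict C ≤ ENNReal.ofReal em • lam.restrict C := by
  have hratio : ENNReal.ofReal (em / ep) * ENNReal.ofReal ep = ENNReal.ofReal em := by
    rw [← ENNReal.ofReal_mul (div_nonneg hC.2.2.1.le hC.2.2.2.1.le),
      div_mul_cancel₀ _ hC.2.2.2.1.ne']
  refine Measure.le_iff.2 fun s hs => ?_
  simp only [Measure.smul_apply, Measure.restrict_apply hs, smul_eq_mul, ← hratio, mul_assoc]
  gcongr
  exact (hC.2.2.2.2 x hx s hs).2

lemma IsLDSet.lintegral_prodKernel_le_swap_add [IsFiniteKernel Q] (hC : IsLDSet Q C lam em ep)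
    {ρ : ℝ≥0∞} (hρ : 1 ≤ ρ + ENNReal.ofReal (em / ep) ^ 2) {p G : X × X → ℝ≥0∞}
    (hG : Measurable G) (hpG : ∀ z, p z ≤ p z.swap + G z) (z : X × X) :
    ∫⁻ y, p y ∂prodKernel Q z
      ≤ ∫⁻ y, p y.swap ∂prodKernel Q z
        + ∫⁻ y, ρ ^ jointVisitIndicator C z y * G y ∂prodKernel Q z := by
  have hCC : MeasurableSet (C ×ˢ C) := hC.1.prod hC.1
  by_cases hz : z ∈ C ×ˢ C
  swap
  · simpa [jointVisitIndicator, hz] using lintegral_add_le_lintegral_swap_add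
      (r := prodKernel Q z) (m := 0) (Measure.map_zero _) hG hpG
  obtain ⟨r, m, hr, hm, hrρ⟩ := Measure.exists_prod_eq_add_swap_invariant
    (hC.smul_restrict_le hz.1) (hC.smul_restrict_le hz.2)
    (hC.smul_restrict_le_smul hz.1) (hC.smul_restrict_le_smul hz.2) hρ
  rw [Measure.prod_restrict, ← prodKernel_apply] at hr hrρ
  have hdecomp : prodKernel Q z = (r + (prodKernel Q z).restrict (C ×ˢ C)ᶜ) + m := by
    rw [add_right_comm, ← hr, Measure.restrict_add_restrict_compl hCC]
  have hweight : ∫⁻ y, G y ∂(r + (prodKernel Q z).restrict (C ×ˢ C)ᶜ)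
      ≤ ∫⁻ y, ρ ^ jointVisitIndicator C z y * G y ∂prodKernel Q z := by
    rw [lintegral_add_measure, ← lintegral_add_compl (μ := prodKernel Q z) _ hCC]
    gcongr ?_ + ?_
    · calc ∫⁻ y, G y ∂r ≤ ∫⁻ y, G y ∂(ρ • (prodKernel Q z).restrict (C ×ˢ C)) :=
            lintegral_mono' hrρ le_rfl
        _ = _ := by
          rw [lintegral_smul_measure, smul_eq_mul, ← lintegral_const_mul _ hG]
          refine setLIntegral_congr_fun hCC fun y hy => ?_
          simp [jointVisitIndicator, hz, hy]
    · exact (setLIntegral_congr_fun hCC.compl fun y hy => by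
        simp [jointVisitIndicator, Set.indicator_of_notMem hy]).ge
  calc ∫⁻ y, p y ∂prodKernel Q z
      ≤ ∫⁻ y, p y.swap ∂prodKernel Q z
        + ∫⁻ y, G y ∂(r + (prodKernel Q z).restrict (C ×ˢ C)ᶜ) := by
        conv_lhs => rw [hdecomp]
        conv_rhs => enter [1]; rw [hdecomp]
        exact lintegral_add_le_lintegral_swap_add hm hG hpG
    _ ≤ _ := by gcongr

lemma IsLDSet.lintegral_pathMeasure_le_swap_add [IsFiniteKernel Q] (hC : IsLDSet Q C lam em ep)
    {ρ : ℝ≥0∞} (hρ : 1 ≤ ρ + ENNReal.ofReal (em / ep) ^ 2) {h : ℕ → X × X → ℝ≥0∞}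
    (hh : ∀ i, Measurable (h i)) (hsymm : ∀ i z, h i z.swap = h i z) (μ : Measure (X × X))
    (n : ℕ) {p G : X × X → ℝ≥0∞} (hp : Measurable p) (hG : Measurable G)
    (hpG : ∀ z, p z ≤ p z.swap + G z) :
    ∫⁻ ω, (∏ i ∈ range n, h i (ω i)) * p (ω n) ∂pathMeasure (prodKernel Q) μ n
      ≤ ∫⁻ ω, (∏ i ∈ range n, h i (ω i)) * p (ω n).swap ∂pathMeasure (prodKernel Q) μ n
        + ∫⁻ ω, (∏ i ∈ range n, h i (ω i) * ρ ^ jointVisitIndicator C (ω i) (ω (i + 1)))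
            * G (ω n) ∂pathMeasure (prodKernel Q) μ n := by
  have hCm := hC.1
  induction n generalizing p G with
  | zero =>
    simpa using (lintegral_mono fun ω : ℕ → X × X => hpG (ω 0)).trans_eq
      (lintegral_add_right _ (hG.comp (measurable_pi_apply 0)))
  | succ n ih =>
    have e_p := lintegral_prod_mul_pathMeasure_succ (prodKernel Q) μ n (w := fun i z => h i z.1)
      (fun i => (hh i).comp measurable_fst) hp
    have e_swap := lintegral_prod_mul_pathMeasure_succ (prodKernel Q) μ n
      (w := fun i z => h i z.1) (f := fun z => p z.swap) (fun i => (hh i).comp measurable_fst)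
      (hp.comp measurable_swap)
    have e_G := lintegral_prod_mul_pathMeasure_succ (prodKernel Q) μ n
      (w := fun i z => h i z.1 * ρ ^ jointVisitIndicator C z.1 z.2)
      (fun i => by fun_prop (disch := assumption)) hG
    dsimp only at e_p e_swap e_G
    rw [e_p, e_swap, e_G]
    have h_swap : ∀ z, ∫⁻ y, h n z * p y.swap ∂prodKernel Q z
        = ∫⁻ y, h n z.swap * p y ∂prodKernel Q z.swap := fun z => by
      rw [prodKernel_apply_swap, lintegral_map (by fun_prop) measurable_swap, hsymm]
    simp_rw [h_swap]
    refine ih (p := fun z => ∫⁻ y, h n z * p y ∂prodKernel Q z)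
      (G := fun z => ∫⁻ y, h n z * ρ ^ jointVisitIndicator C z y * G y ∂prodKernel Q z)
      (Measurable.lintegral_kernel_prod_right' (f := fun q => h n q.1 * p q.2) (by fun_prop))
      (Measurable.lintegral_kernel_prod_right'
        (f := fun q => h n q.1 * ρ ^ jointVisitIndicator C q.1 q.2 * G q.2)
        (by fun_prop (disch := assumption))) fun z => ?_
    calc ∫⁻ y, h n z * p y ∂prodKernel Q z = h n z * ∫⁻ y, p y ∂prodKernel Q z :=
          lintegral_const_mul _ hp
      _ ≤ h n z * (∫⁻ y, p y.swap ∂prodKernel Q z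
          + ∫⁻ y, ρ ^ jointVisitIndicator C z y * G y ∂prodKernel Q z) := by
          gcongr
          exact hC.lintegral_prodKernel_le_swap_add hρ hG hpG z
      _ = _ := by
          simp only [← h_swap, mul_assoc, mul_add]
          congr 1 <;> exact (lintegral_const_mul _ (by fun_prop (disch := assumption))).symm

lemma IsLDSet.lintegral_pathMeasure_le_swap_add_jointVisits [IsFiniteKernel Q]
    (hC : IsLDSet Q C lam em ep) {ρ : ℝ≥0∞} (hρ : 1 ≤ ρ + ENNReal.ofReal (em / ep) ^ 2)
    {h : ℕ → X × X → ℝ≥0∞} (hh : ∀ i, Measurable (h i)) (hsymm : ∀ i z, h i z.swap = h i z)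
    (μ : Measure (X × X)) (n : ℕ) {f : X × X → ℝ≥0∞} (hf : Measurable f) (hf1 : ∀ z, f z ≤ 1) :
    ∫⁻ ω, (∏ i ∈ range (n + 1), h i (ω i)) * f (ω n) ∂pathMeasure (prodKernel Q) μ n
      ≤ ∫⁻ ω, (∏ i ∈ range (n + 1), h i (ω i)) * f (ω n).swap ∂pathMeasure (prodKernel Q) μ n
        + ∫⁻ ω, (∏ i ∈ range (n + 1), h i (ω i)) * ρ ^ jointVisits C n ω
            ∂pathMeasure (prodKernel Q) μ n := by
  have hpG : ∀ z, h n z * f z ≤ h n z.swap * f z.swap + h n z := fun z =>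
    le_add_left (mul_le_of_le_one_right' (hf1 z))
  have key := hC.lintegral_pathMeasure_le_swap_add hρ hh hsymm μ n ((hh n).mul hf) (hh n) hpG
  simp only [Pi.mul_apply, hsymm] at key
  have hD : ∀ ω : ℕ → X × X, (∏ i ∈ range (n + 1), h i (ω i)) * ρ ^ jointVisits C n ω
      = (∏ i ∈ range n, h i (ω i) * ρ ^ jointVisitIndicator C (ω i) (ω (i + 1))) * h n (ω n) := by
    intro ω
    rw [prod_mul_distrib, prod_pow_eq_pow_sum, prod_range_succ, jointVisits]
    simp only [jointVisitIndicator]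
    ring
  simp_rw [hD]
  simpa only [prod_range_succ, mul_assoc] using key

end LocalDoeblin

lemma ENNReal.ofReal_iSup_abs_toReal_sub_le {ι : Sort*} {a b : ι → ℝ≥0∞} {D : ℝ≥0∞}
    (hab : ∀ i, a i ≤ b i + D) (hba : ∀ i, b i ≤ a i + D) :
    ENNReal.ofReal (⨆ i, |(a i).toReal - (b i).toReal|) ≤ D := by
  rcases eq_or_ne D ⊤ with rfl | hD
  · exact le_top
  refine ENNReal.ofReal_le_of_le_toReal (Real.iSup_le (fun i => ?_) ENNReal.toReal_nonneg)
  rcases eq_or_ne (a i) ⊤ with ha | ha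
  · have hb : b i = ⊤ := by simpa [ha, hD] using hab i
    simp [ha, hb]
  have hb : b i ≠ ⊤ := ne_top_of_le_ne_top (ENNReal.add_ne_top.2 ⟨ha, hD⟩) (hba i)
  have h₁ := ENNReal.toReal_mono (ENNReal.add_ne_top.2 ⟨hb, hD⟩) (hab i)
  have h₂ := ENNReal.toReal_mono (ENNReal.add_ne_top.2 ⟨ha, hD⟩) (hba i)
  rw [ENNReal.toReal_add hb hD] at h₁
  rw [ENNReal.toReal_add ha hD] at h₂
  exact abs_sub_le_iff.2 ⟨by linarith, by linarith⟩

theorem forgetting_hmm_stmt2_general {X : Type*} [MeasurableSpace X]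
    (Q : Kernel X X) [IsMarkovKernel Q]
    (C : Set X) (lam : Measure X) (em ep : ℝ) (hC : IsLDSet Q C lam em ep)
    (ν ν' : Measure X) [IsProbabilityMeasure ν] [IsProbabilityMeasure ν']
    (n : ℕ) (g : ℕ → X → ℝ≥0∞) (hg : ∀ i, Measurable (g i)) :
    ENNReal.ofReal
        (⨆ A : {S : Set X // MeasurableSet S},
          |(∫⁻ ω, (∏ i ∈ Finset.range (n + 1), g i (ω i).1 * g i (ω i).2) *
                (A : Set X).indicator (fun _ => (1 : ℝ≥0∞)) (ω n).1
              ∂(pathMeasure (prodKernel Q) (ν.prod ν') n)).toReal -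
           (∫⁻ ω, (∏ i ∈ Finset.range (n + 1), g i (ω i).1 * g i (ω i).2) *
                (A : Set X).indicator (fun _ => (1 : ℝ≥0∞)) (ω n).1
              ∂(pathMeasure (prodKernel Q) (ν'.prod ν) n)).toReal|)
      ≤ ∫⁻ ω, (∏ i ∈ Finset.range (n + 1), g i (ω i).1 * g i (ω i).2) *
            ENNReal.ofReal (1 - (em / ep) ^ 2) ^ jointVisits C n ω
          ∂(pathMeasure (prodKernel Q) (ν.prod ν') n) := by
  have hρ : 1 ≤ ENNReal.ofReal (1 - (em / ep) ^ 2) + ENNReal.ofReal (em / ep) ^ 2 := by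
    rw [← ENNReal.ofReal_pow (div_nonneg hC.2.2.1.le hC.2.2.2.1.le)]
    calc (1 : ℝ≥0∞) = ENNReal.ofReal (1 - (em / ep) ^ 2 + (em / ep) ^ 2) := by simp
      _ ≤ _ := ENNReal.ofReal_add_le
  have hh : ∀ i, Measurable fun z : X × X => g i z.1 * g i z.2 := fun i => by fun_prop
  have hsymm : ∀ i (z : X × X), g i z.swap.1 * g i z.swap.2 = g i z.1 * g i z.2 :=
    fun _ _ => mul_comm _ _
  refine ENNReal.ofReal_iSup_abs_toReal_sub_le (fun A => ?_) (fun A => ?_) <;>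
    rw [lintegral_prod_mul_pathMeasure_prodKernel_swap Q ν ν' hh hsymm _ n
      (f := fun z => (A : Set X).indicator (fun _ => 1) z.1)
      ((measurable_const.indicator A.2).comp measurable_fst)]
  · exact hC.lintegral_pathMeasure_le_swap_add_jointVisits hρ hh hsymm _ n
      ((measurable_const.indicator A.2).comp measurable_fst)
      fun _ => Set.indicator_apply_le' (fun _ => le_rfl) fun _ => zero_le_one
  · exact hC.lintegral_pathMeasure_le_swap_add_jointVisits hρ hh hsymm _ n
      ((measurable_const.indicator A.2).comp measurable_snd)
      fun _ => Set.indicator_apply_le' (fun _ => le_rfl) fun _ => zero_le_one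

/-- for an LD-set `C`, probability measures `ν, ν'` and nonnegative measurable
functions `g_0,…,g_n` with `E^Q_ν[∏ g_i(X_i)] < ∞` and `E^Q_{ν'}[∏ g_i(X_i)] < ∞`, the quantity
`Δ_n(ν,ν',{g_i}) = sup_A |E^{Q̄}_{ν⊗ν'}[∏ ḡ_i(X̄_i) 1_A(X_n)] − E^{Q̄}_{ν'⊗ν}[∏ ḡ_i(X̄_i) 1_A(X_n)]|`
satisfies `Δ_n ≤ E^{Q̄}_{ν⊗ν'}[∏ ḡ_i(X̄_i) ρ_C^{N_{C,n}}]`, with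
`ρ_C = 1 − (ε⁻_C/ε⁺_C)²` and `N_{C,n} = Σ_{i<n} 1_{C×C}(X̄_i) 1_{C×C}(X̄_{i+1})`. -/
theorem forgetting_hmm_stmt2 {X : Type*} [MeasurableSpace X]
    (Q : Kernel X X) [IsMarkovKernel Q]
    (C : Set X) (lam : Measure X) (em ep : ℝ) (hC : IsLDSet Q C lam em ep)
    (ν ν' : Measure X) [IsProbabilityMeasure ν] [IsProbabilityMeasure ν']
    (n : ℕ) (g : ℕ → X → ℝ≥0∞) (hg : ∀ i, Measurable (g i))
    (hint : (∫⁻ ω, ∏ i ∈ Finset.range (n + 1), g i (ω i) ∂(pathMeasure Q ν n)) ≠ ⊤)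
    (hint' : (∫⁻ ω, ∏ i ∈ Finset.range (n + 1), g i (ω i) ∂(pathMeasure Q ν' n)) ≠ ⊤) :
    ENNReal.ofReal
        (⨆ A : {S : Set X // MeasurableSet S},
          |(∫⁻ ω, (∏ i ∈ Finset.range (n + 1), g i (ω i).1 * g i (ω i).2) *
                (A : Set X).indicator (fun _ => (1 : ℝ≥0∞)) (ω n).1
              ∂(pathMeasure (prodKernel Q) (ν.prod ν') n)).toReal -
           (∫⁻ ω, (∏ i ∈ Finset.range (n + 1), g i (ω i).1 * g i (ω i).2) *
                (A : Set X).indicator (fun _ => (1 : ℝ≥0∞)) (ω n).1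
              ∂(pathMeasure (prodKernel Q) (ν'.prod ν) n)).toReal|)
      ≤ ∫⁻ ω, (∏ i ∈ Finset.range (n + 1), g i (ω i).1 * g i (ω i).2) *
            ENNReal.ofReal (1 - (em / ep) ^ 2) ^ jointVisits C n ω
          ∂(pathMeasure (prodKernel Q) (ν.prod ν') n) :=
  forgetting_hmm_stmt2_general Q C lam em ep hC ν ν' n g hg
end

section
/- Let Q be a Markov kernel on a measurable space (X,𝒳). Assume there exist a function V : X → [1,∞), a function W : X → (0,∞) and a constant b < ∞ such that QV(x) ≤ V(x) e^{−W(x)+b} for all x ∈ X (equivalently log(QV/V) ≤ −W + b). Let n be a positive integer and let F_0,…,F_{n−1} be measurable real-valued functions on X with sup_{x∈X}(|F_k(x)| − W(x)) < ∞ for each k. Then, for every x ∈ X, E_x^Q[ exp( Σ_{k=0}^{n−1} |F_k(X_k)| ) ] ≤ V(x) · exp( bn + Σ_{k=0}^{n−1} sup_{X}(|F_k| − W) ). -/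
open MeasureTheory ProbabilityTheory
open scoped ENNReal

/-!
The drift condition makes `exp (W X₀ + ⋯ + W X_{m-1}) · V X_m` a supermartingale up to the
factor `e^b` per step, so its mean is at most `V x · e^{bm}`. Since `|F_k| ≤ W + sup (|F_k| - W)`
and, because `QV ≥ 1`, also `e^W ≤ e^b V`, this weight dominates `exp (∑_{k ≤ m} |F_k(X_k)|)`
up to the constant `e^{b + ∑ sup (|F_k| - W)}`.
-/

namespace pathMeasure

variable {X : Type*} [MeasurableSpace X] (Q : Kernel X X)

theorem lintegral_dirac_zero (x : X) {g : (ℕ → X) → ℝ≥0∞} (hg : Measurable g) :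
    ∫⁻ ω, g ω ∂(pathMeasure Q (Measure.dirac x) 0) = g fun _ => x := by
  have hconst : Measurable fun y : X => fun _ : ℕ => y :=
    measurable_pi_lambda _ fun _ => measurable_id
  rw [pathMeasure, lintegral_map hg hconst]
  exact lintegral_dirac' x (hg.comp hconst)

variable [IsSFiniteKernel Q]

theorem measurable_step (n : ℕ) :
    Measurable fun ω : ℕ → X => (Q (ω n)).map (Function.update ω (n + 1)) := by
  refine Measure.measurable_of_measurable_coe _ fun s hs => ?_
  have hupd : MeasurableSet {p : (ℕ → X) × X | Function.update p.1 (n + 1) p.2 ∈ s} :=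
    measurable_update' hs
  convert Kernel.measurable_kernel_prodMk_left (κ := Q.comap (· n) (measurable_pi_apply n)) hupd
    using 2 with ω
  rw [Measure.map_apply (measurable_update _) hs, Kernel.comap_apply]
  rfl

theorem lintegral_succ (ν : Measure X) (n : ℕ) {g : (ℕ → X) → ℝ≥0∞} (hg : Measurable g) :
    ∫⁻ ω, g ω ∂(pathMeasure Q ν (n + 1))
      = ∫⁻ ω, ∫⁻ x', g (Function.update ω (n + 1) x') ∂(Q (ω n)) ∂(pathMeasure Q ν n) := by
  rw [pathMeasure, Measure.lintegral_bind (measurable_step Q n).aemeasurable hg.aemeasurable]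
  simp_rw [lintegral_map hg (measurable_update _)]

theorem lintegral_le_pow_mul {G : ℕ → (ℕ → X) → ℝ≥0∞} (hG : ∀ m, Measurable (G m)) (c : ℝ≥0∞)
    (hstep : ∀ m ω, ∫⁻ x', G (m + 1) (Function.update ω (m + 1) x') ∂(Q (ω m)) ≤ c * G m ω)
    (ν : Measure X) (m : ℕ) :
    ∫⁻ ω, G m ω ∂(pathMeasure Q ν m) ≤ c ^ m * ∫⁻ ω, G 0 ω ∂(pathMeasure Q ν 0) := by
  induction m with
  | zero => simp
  | succ m ih =>
    calc ∫⁻ ω, G (m + 1) ω ∂(pathMeasure Q ν (m + 1))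
        ≤ ∫⁻ ω, c * G m ω ∂(pathMeasure Q ν m) := by
          rw [lintegral_succ Q ν m (hG _)]
          exact lintegral_mono (hstep m)
      _ = c * ∫⁻ ω, G m ω ∂(pathMeasure Q ν m) := lintegral_const_mul c (hG m)
      _ ≤ c ^ (m + 1) * ∫⁻ ω, G 0 ω ∂(pathMeasure Q ν 0) := by
          rw [pow_succ', mul_assoc]
          exact mul_le_mul_right ih c

end pathMeasure

section Drift

variable {X : Type*} [MeasurableSpace X] {Q : Kernel X X} {V W : X → ℝ} {b : ℝ}

theorem exp_le_exp_mul_of_drift [IsMarkovKernel Q] (hV : ∀ x, 1 ≤ V x)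
    (hdrift : ∀ x, (∫⁻ x', ENNReal.ofReal (V x') ∂(Q x)) ≤
      ENNReal.ofReal (V x * Real.exp (-W x + b)))
    (y : X) : Real.exp (W y) ≤ Real.exp b * V y := by
  have hQV : (1 : ℝ≥0∞) ≤ ∫⁻ x', ENNReal.ofReal (V x') ∂(Q y) := by
    calc (1 : ℝ≥0∞) = ∫⁻ _, 1 ∂(Q y) := by simp
      _ ≤ _ := lintegral_mono fun x' => ENNReal.one_le_ofReal.mpr (hV x')
  have h : 1 ≤ V y * Real.exp (-W y + b) := ENNReal.one_le_ofReal.mp (hQV.trans (hdrift y))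
  calc Real.exp (W y) ≤ Real.exp (W y) * (V y * Real.exp (-W y + b)) :=
        le_mul_of_one_le_right (Real.exp_nonneg _) h
    _ = Real.exp b * V y := by
        rw [mul_left_comm, ← Real.exp_add, add_neg_cancel_left, mul_comm]

theorem lintegral_update_exp_sum_mul_le (hVmeas : Measurable V)
    (hdrift : ∀ x, (∫⁻ x', ENNReal.ofReal (V x') ∂(Q x)) ≤
      ENNReal.ofReal (V x * Real.exp (-W x + b)))
    (m : ℕ) (ω : ℕ → X) :
    ∫⁻ x', ENNReal.ofReal (Real.exp (∑ k ∈ Finset.range (m + 1),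
        W (Function.update ω (m + 1) x' k))) *
        ENNReal.ofReal (V (Function.update ω (m + 1) x' (m + 1))) ∂(Q (ω m))
      ≤ ENNReal.ofReal (Real.exp b) *
          (ENNReal.ofReal (Real.exp (∑ k ∈ Finset.range m, W (ω k))) *
            ENNReal.ofReal (V (ω m))) := by
  have hpast : ∀ x', ∑ k ∈ Finset.range (m + 1), W (Function.update ω (m + 1) x' k)
      = ∑ k ∈ Finset.range (m + 1), W (ω k) := fun x' =>
    Finset.sum_congr rfl fun k hk =>
      congrArg W (Function.update_of_ne (Finset.mem_range.mp hk).ne _ _)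
  simp_rw [hpast, Function.update_self]
  rw [lintegral_const_mul _ hVmeas.ennreal_ofReal]
  calc ENNReal.ofReal (Real.exp (∑ k ∈ Finset.range (m + 1), W (ω k)))
        * ∫⁻ x', ENNReal.ofReal (V x') ∂(Q (ω m))
      ≤ ENNReal.ofReal (Real.exp (∑ k ∈ Finset.range (m + 1), W (ω k)))
        * ENNReal.ofReal (V (ω m) * Real.exp (-W (ω m) + b)) := mul_le_mul_right (hdrift _) _
    _ = _ := by
        rw [← ENNReal.ofReal_mul (Real.exp_nonneg _), ← ENNReal.ofReal_mul (Real.exp_nonneg _),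
          ← ENNReal.ofReal_mul (by positivity)]
        congr 1
        rw [Finset.sum_range_succ, Real.exp_add, Real.exp_add, Real.exp_neg]
        field_simp

theorem lintegral_exp_sum_mul_le [IsSFiniteKernel Q] (hVmeas : Measurable V) (hWmeas : Measurable W)
    (hdrift : ∀ x, (∫⁻ x', ENNReal.ofReal (V x') ∂(Q x)) ≤
      ENNReal.ofReal (V x * Real.exp (-W x + b)))
    (x : X) (m : ℕ) :
    ∫⁻ ω, ENNReal.ofReal (Real.exp (∑ k ∈ Finset.range m, W (ω k))) * ENNReal.ofReal (V (ω m))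
        ∂(pathMeasure Q (Measure.dirac x) m)
      ≤ ENNReal.ofReal (V x * Real.exp (b * m)) := by
  have hG : ∀ m, Measurable fun ω : ℕ → X =>
      ENNReal.ofReal (Real.exp (∑ k ∈ Finset.range m, W (ω k))) * ENNReal.ofReal (V (ω m)) :=
    fun m => by fun_prop
  refine (pathMeasure.lintegral_le_pow_mul Q hG _
    (lintegral_update_exp_sum_mul_le hVmeas hdrift) _ m).trans_eq ?_
  rw [pathMeasure.lintegral_dirac_zero Q x (hG 0), ← ENNReal.ofReal_pow (Real.exp_nonneg _),
    ← Real.exp_nat_mul]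
  simp [← ENNReal.ofReal_mul (Real.exp_nonneg _), mul_comm]

theorem lintegral_exp_sum_le [IsMarkovKernel Q] (hV : ∀ x, 1 ≤ V x) (hVmeas : Measurable V)
    (hWmeas : Measurable W)
    (hdrift : ∀ x, (∫⁻ x', ENNReal.ofReal (V x') ∂(Q x)) ≤
      ENNReal.ofReal (V x * Real.exp (-W x + b)))
    (x : X) (m : ℕ) :
    ∫⁻ ω, ENNReal.ofReal (Real.exp (∑ k ∈ Finset.range (m + 1), W (ω k)))
        ∂(pathMeasure Q (Measure.dirac x) m)
      ≤ ENNReal.ofReal (V x * Real.exp (b * (m + 1 : ℕ))) := by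
  have hpt : ∀ ω : ℕ → X, ENNReal.ofReal (Real.exp (∑ k ∈ Finset.range (m + 1), W (ω k)))
      ≤ ENNReal.ofReal (Real.exp b) *
        (ENNReal.ofReal (Real.exp (∑ k ∈ Finset.range m, W (ω k))) * ENNReal.ofReal (V (ω m))) := by
    intro ω
    rw [← ENNReal.ofReal_mul (Real.exp_nonneg _), ← ENNReal.ofReal_mul (Real.exp_nonneg _),
      Finset.sum_range_succ, Real.exp_add, mul_left_comm]
    gcongr
    exact exp_le_exp_mul_of_drift hV hdrift _
  calc _ ≤ ENNReal.ofReal (Real.exp b) * ∫⁻ ω, ENNReal.ofReal (Real.exp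
          (∑ k ∈ Finset.range m, W (ω k))) * ENNReal.ofReal (V (ω m))
          ∂(pathMeasure Q (Measure.dirac x) m) :=
        (lintegral_mono hpt).trans_eq (lintegral_const_mul' _ _ ENNReal.ofReal_ne_top)
    _ ≤ ENNReal.ofReal (Real.exp b) * ENNReal.ofReal (V x * Real.exp (b * m)) :=
        mul_le_mul_right (lintegral_exp_sum_mul_le hVmeas hWmeas hdrift x m) _
    _ = _ := by
        rw [← ENNReal.ofReal_mul (Real.exp_nonneg _)]
        push_cast
        rw [mul_add_one, Real.exp_add]
        ring_nf

end Drift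

theorem forgetting_hmm_stmt10_general {X : Type*} [MeasurableSpace X]
    (Q : Kernel X X) [IsMarkovKernel Q]
    (V : X → ℝ) (hV : ∀ x, 1 ≤ V x) (hVmeas : Measurable V)
    (W : X → ℝ) (hWmeas : Measurable W)
    (b : ℝ)
    (hdrift : ∀ x, (∫⁻ x', ENNReal.ofReal (V x') ∂(Q x)) ≤
      ENNReal.ofReal (V x * Real.exp (-W x + b)))
    (n : ℕ) (hn : 1 ≤ n)
    (F : ℕ → X → ℝ)
    (hFW : ∀ k, BddAbove (Set.range fun x => |F k x| - W x))
    (x : X) :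
    (∫⁻ ω, ENNReal.ofReal (Real.exp (∑ k ∈ Finset.range n, |F k (ω k)|))
        ∂(pathMeasure Q (Measure.dirac x) (n - 1)))
      ≤ ENNReal.ofReal
          (V x * Real.exp (b * n + ∑ k ∈ Finset.range n, ⨆ x' : X, (|F k x'| - W x'))) := by
  obtain ⟨m, rfl⟩ : ∃ m, n = m + 1 := ⟨n - 1, (Nat.sub_add_cancel hn).symm⟩
  set c : ℕ → ℝ := fun k => ⨆ x' : X, (|F k x'| - W x')
  have hpt : ∀ ω : ℕ → X, ENNReal.ofReal (Real.exp (∑ k ∈ Finset.range (m + 1), |F k (ω k)|))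
      ≤ ENNReal.ofReal (Real.exp (∑ k ∈ Finset.range (m + 1), c k)) *
        ENNReal.ofReal (Real.exp (∑ k ∈ Finset.range (m + 1), W (ω k))) := by
    intro ω
    rw [← ENNReal.ofReal_mul (Real.exp_nonneg _), ← Real.exp_add, ← Finset.sum_add_distrib]
    gcongr with k
    linarith [le_ciSup (hFW k) (ω k)]
  calc _ ≤ ENNReal.ofReal (Real.exp (∑ k ∈ Finset.range (m + 1), c k)) *
          ∫⁻ ω, ENNReal.ofReal (Real.exp (∑ k ∈ Finset.range (m + 1), W (ω k)))
          ∂(pathMeasure Q (Measure.dirac x) m) :=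
        (lintegral_mono hpt).trans_eq (lintegral_const_mul' _ _ ENNReal.ofReal_ne_top)
    _ ≤ ENNReal.ofReal (Real.exp (∑ k ∈ Finset.range (m + 1), c k)) *
          ENNReal.ofReal (V x * Real.exp (b * (m + 1 : ℕ))) :=
        mul_le_mul_right (lintegral_exp_sum_le hV hVmeas hWmeas hdrift x m) _
    _ = _ := by
        rw [← ENNReal.ofReal_mul (Real.exp_nonneg _), Real.exp_add]
        ring_nf

/-- under the multiplicative drift condition `QV ≤ V e^{−W+b}` with
`V : X → [1,∞)`, `W : X → (0,∞)`, if `F_0,…,F_{n−1}` are measurable with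
`sup_X(|F_k| − W) < ∞`, then for every `x`,
`E_x^Q[exp(Σ_{k<n} |F_k(X_k)|)] ≤ V(x) exp(bn + Σ_{k<n} sup_X(|F_k| − W))`. -/
theorem forgetting_hmm_stmt10 {X : Type*} [MeasurableSpace X]
    (Q : Kernel X X) [IsMarkovKernel Q]
    (V : X → ℝ) (hV : ∀ x, 1 ≤ V x) (hVmeas : Measurable V)
    (W : X → ℝ) (hW : ∀ x, 0 < W x) (hWmeas : Measurable W)
    (b : ℝ)
    (hdrift : ∀ x, (∫⁻ x', ENNReal.ofReal (V x') ∂(Q x)) ≤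
      ENNReal.ofReal (V x * Real.exp (-W x + b)))
    (n : ℕ) (hn : 1 ≤ n)
    (F : ℕ → X → ℝ) (hF : ∀ k, Measurable (F k))
    (hFW : ∀ k, BddAbove (Set.range fun x => |F k x| - W x))
    (x : X) :
    (∫⁻ ω, ENNReal.ofReal (Real.exp (∑ k ∈ Finset.range n, |F k (ω k)|))
        ∂(pathMeasure Q (Measure.dirac x) (n - 1)))
      ≤ ENNReal.ofReal
          (V x * Real.exp (b * n + ∑ k ∈ Finset.range n, ⨆ x' : X, (|F k x'| - W x'))) :=
  forgetting_hmm_stmt10_general Q V hV hVmeas W hWmeas b hdrift n hn F hFW x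
end

section
/- Let Q be a Markov kernel on (X,𝒳) and G a Markov kernel from (X,𝒳) to (Y,𝒴), and let T := Q⊗G be the Markov kernel on X×Y defined by T[(x,y),C] := ∬ Q(x,dx') G(x',dy') 1_C(x',y'). Let {(X_k,Y_k)}_{k≥0} be the Markov chain with kernel T and initial distribution ν⊗G, where (ν⊗G)(C) := ∬ ν(dx) G(x,dy) 1_C(x,y). Then for every n ≥ 0 and every nonnegative measurable function f on Y, E^T_{ν⊗G}[ ∏_{k=0}^n f(Y_k) ] = E^Q_ν[ ∏_{k=0}^n G(X_k, f) ], where G(x,f) := ∫ G(x,dy) f(y). -/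
open MeasureTheory ProbabilityTheory
open scoped ENNReal

/-- The joint HMM kernel `T = Q ⊗ G` on `X × Y`,
`T[(x,y), C] = ∬ Q(x,dx') G(x',dy') 1_C(x',y')`. -/
noncomputable def jointKernel {X Y : Type*} [MeasurableSpace X] [MeasurableSpace Y]
    (Q : Kernel X X) (G : Kernel X Y) [IsSFiniteKernel Q] [IsSFiniteKernel G] :
    Kernel (X × Y) (X × Y) :=
  Kernel.comap (Q ⊗ₖ (G.comap Prod.snd measurable_snd)) Prod.fst measurable_fst

/-!
Condition on the hidden path. One step of the joint chain moves `X` by `Q` and then draws `Y`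
from `G` at the new state, so integrating out the newest observation replaces `f (Y_{n+1})` by
`G (X_{n+1}, f)`. To make this an induction on `n`, the identity is proved with an extra
weight `F (X_0, …, X_n)` on both sides: the last transition of both chains is integrated out
into a new weight on the shorter path.
-/

theorem Finset.prod_range_succ_comp_update {α M : Type*} [CommMonoid M] (g : α → M)
    (ω : ℕ → α) (n : ℕ) (a : α) :
    ∏ k ∈ Finset.range (n + 1), g (Function.update ω n a k)
      = (∏ k ∈ Finset.range n, g (ω k)) * g a := by
  rw [Finset.prod_range_succ, Function.update_self]
  congr 1
  exact Finset.prod_congr rfl fun k hk => by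
    rw [Function.update_of_ne (Finset.mem_range.mp hk).ne]

section PathMeasure

variable {X : Type*} [MeasurableSpace X] (K : Kernel X X) (μ : Measure X)

theorem lintegral_pathMeasure_zero {g : (ℕ → X) → ℝ≥0∞} (hg : Measurable g) :
    ∫⁻ ω, g ω ∂pathMeasure K μ 0 = ∫⁻ x, g (fun _ => x) ∂μ :=
  lintegral_map hg (measurable_pi_lambda _ fun _ => measurable_id)

variable [IsSFiniteKernel K]

theorem measurable_map_update_kernel (n : ℕ) :
    Measurable fun ω : ℕ → X => (K (ω n)).map (Function.update ω (n + 1)) := by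
  refine Measure.measurable_of_measurable_coe _ fun s hs => ?_
  simp_rw [Measure.map_apply (measurable_update _) hs]
  exact Kernel.measurable_kernel_prodMk_left (κ := K.comap (· n) (measurable_pi_apply n))
    (measurable_update' hs)

theorem lintegral_pathMeasure_succ_s12 (n : ℕ) {g : (ℕ → X) → ℝ≥0∞} (hg : Measurable g) :
    ∫⁻ ω, g ω ∂pathMeasure K μ (n + 1)
      = ∫⁻ ω, ∫⁻ x, g (Function.update ω (n + 1) x) ∂K (ω n) ∂pathMeasure K μ n := by
  rw [pathMeasure, Measure.lintegral_bind (measurable_map_update_kernel K n).aemeasurable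
    hg.aemeasurable]
  exact lintegral_congr fun ω => lintegral_map hg (measurable_update _)

theorem lintegral_mul_prod_pathMeasure_succ (n : ℕ) {H : (ℕ → X) → ℝ≥0∞} (hH : Measurable H)
    {g : X → ℝ≥0∞} (hg : Measurable g) :
    ∫⁻ ω, H ω * ∏ k ∈ Finset.range (n + 1 + 1), g (ω k) ∂pathMeasure K μ (n + 1)
      = ∫⁻ ω, (∫⁻ x, H (Function.update ω (n + 1) x) * g x ∂K (ω n))
          * ∏ k ∈ Finset.range (n + 1), g (ω k) ∂pathMeasure K μ n := by
  rw [lintegral_pathMeasure_succ_s12 K μ n (by fun_prop)]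
  refine lintegral_congr fun ω => ?_
  simp_rw [Finset.prod_range_succ_comp_update, ← mul_assoc,
    mul_right_comm _ (∏ k ∈ Finset.range (n + 1), g (ω k))]
  exact lintegral_mul_const _ (by fun_prop)

end PathMeasure

section JointKernel

variable {X Y : Type*} [MeasurableSpace X] [MeasurableSpace Y]
  (Q : Kernel X X) [IsSFiniteKernel Q] (G : Kernel X Y) [IsSFiniteKernel G]

instance : IsSFiniteKernel (jointKernel Q G) := by
  unfold jointKernel; infer_instance

theorem lintegral_jointKernel_mul (z : X × Y) {g : X → ℝ≥0∞} (hg : Measurable g)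
    {f : Y → ℝ≥0∞} (hf : Measurable f) :
    ∫⁻ p, g p.1 * f p.2 ∂jointKernel Q G z = ∫⁻ x, g x * ∫⁻ y, f y ∂G x ∂Q z.1 := by
  rw [jointKernel, Kernel.comap_apply, Kernel.lintegral_compProd _ _ _ (by fun_prop)]
  exact lintegral_congr fun x => lintegral_const_mul (g x) hf

theorem lintegral_mul_prod_pathMeasure_jointKernel (ν : Measure X) [SFinite ν]
    {f : Y → ℝ≥0∞} (hf : Measurable f) (n : ℕ) {F : (ℕ → X) → ℝ≥0∞} (hF : Measurable F) :
    ∫⁻ ω, F (Prod.fst ∘ ω) * ∏ k ∈ Finset.range (n + 1), f (ω k).2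
        ∂pathMeasure (jointKernel Q G) (ν ⊗ₘ G) n
      = ∫⁻ ω, F ω * ∏ k ∈ Finset.range (n + 1), ∫⁻ y, f y ∂G (ω k)
          ∂pathMeasure Q ν n := by
  have hGf : Measurable fun x => ∫⁻ y, f y ∂G x := hf.lintegral_kernel
  induction n generalizing F with
  | zero =>
    simp only [zero_add, Finset.prod_range_one]
    rw [lintegral_pathMeasure_zero _ _ (by fun_prop), lintegral_pathMeasure_zero _ _ (by fun_prop),
      Measure.lintegral_compProd (by fun_prop)]
    exact lintegral_congr fun x => lintegral_const_mul (F fun _ => x) hf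
  | succ n ih =>
    set F' : (ℕ → X) → ℝ≥0∞ :=
      fun ω => ∫⁻ x, F (Function.update ω (n + 1) x) * ∫⁻ y, f y ∂G x ∂Q (ω n)
    have hF' : Measurable F' :=
      Measurable.lintegral_kernel_prod_right' (κ := Q.comap (· n) (measurable_pi_apply n))
        (f := fun p => F (Function.update p.1 (n + 1) p.2) * ∫⁻ y, f y ∂G p.2) (by fun_prop)
    have hstep (ω : ℕ → X × Y) :
        ∫⁻ p, F (Prod.fst ∘ Function.update ω (n + 1) p) * f p.2 ∂jointKernel Q G (ω n)
          = F' (Prod.fst ∘ ω) := by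
      simp_rw [Function.comp_update]
      exact lintegral_jointKernel_mul Q G _ (hF.comp (measurable_update _)) hf
    rw [lintegral_mul_prod_pathMeasure_succ _ _ n (H := fun ω => F (Prod.fst ∘ ω))
        (g := fun p => f p.2) (by fun_prop) (by fun_prop),
      lintegral_mul_prod_pathMeasure_succ _ _ n hF hGf]
    simp_rw [hstep]
    exact ih hF'

end JointKernel

/-- for the Markov chain `{(X_k,Y_k)}` with kernel `T = Q ⊗ G` and initial
distribution `ν ⊗ G`, for every `n` and every nonnegative measurable `f` on `Y`,
`E^T_{ν⊗G}[∏_{k=0}^n f(Y_k)] = E^Q_ν[∏_{k=0}^n G(X_k, f)]`. -/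
theorem forgetting_hmm_stmt12 {X Y : Type*} [MeasurableSpace X] [MeasurableSpace Y]
    (Q : Kernel X X) [IsMarkovKernel Q] (G : Kernel X Y) [IsMarkovKernel G]
    (ν : Measure X) [IsProbabilityMeasure ν]
    (n : ℕ) (f : Y → ℝ≥0∞) (hf : Measurable f) :
    (∫⁻ ω, ∏ k ∈ Finset.range (n + 1), f (ω k).2
        ∂(pathMeasure (jointKernel Q G) (ν ⊗ₘ G) n))
      = ∫⁻ ω, ∏ k ∈ Finset.range (n + 1), (∫⁻ y, f y ∂(G (ω k)))
          ∂(pathMeasure Q ν n) := by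
  simpa using lintegral_mul_prod_pathMeasure_jointKernel Q G ν hf n (F := 1) measurable_const
end

section
/- Let Q be a Markov kernel on (X,𝒳), g : X×Y → (0,∞) a measurable likelihood, D ∈ 𝒳, and ν a probability measure with νQ1_D > 0. Then for any p ≥ 1 and any (y₀,y₁) ∈ Y², ( [ log Φ_{ν,D}(y₀,y₁) − log(νQ1_D) ]_- )^p ≤ 2^{p−1} (νQ1_D)^{-1} ∬ ν(dx₀) Q(x₀,dx₁) 1_D(x₁) [ ((log g(x₀,y₀))_-)^p + ((log g(x₁,y₁))_-)^p ]. -/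
/-!
Normalise `μ := ν ⊗ₘ Q|_D` (the law of `(x₀, x₁)` on `{x₁ ∈ D}`) by its mass `m = νQ1_D`.
Writing `a = (log g(x₀,y₀))₋ + (log g(x₁,y₁))₋`, we have `g(x₀,y₀) g(x₁,y₁) ≥ exp (-a)`, so
Jensen for `exp` gives `Φ / m ≥ ⨍ exp (-a) ≥ exp (-⨍ a)`, i.e. `log m - log Φ ≤ ⨍ a`.
Jensen for `t ↦ t ^ p` then gives `(⨍ a) ^ p ≤ ⨍ a ^ p`, and `(s + t) ^ p ≤ 2 ^ (p - 1) (s ^ p + t ^ p)`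
finishes the bound.
-/

open MeasureTheory ProbabilityTheory
open scoped ENNReal

/-- `Φ_{ν,D}(y₀,y₁) = ν[g(·,y₀) Q (g(·,y₁) 1_D)]`. -/
noncomputable def Phi {X Y : Type*} [MeasurableSpace X] (Q : Kernel X X)
    (g : X → Y → ℝ) (ν : Measure X) (D : Set X) (y0 y1 : Y) : ℝ≥0∞ :=
  ∫⁻ x0, ENNReal.ofReal (g x0 y0) * ∫⁻ x1 in D, ENNReal.ofReal (g x1 y1) ∂(Q x0) ∂ν

open Real Set

lemma Real.rpow_add_le_mul_rpow_add_rpow {a b : ℝ} (ha : 0 ≤ a) (hb : 0 ≤ b) {p : ℝ}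
    (hp : 1 ≤ p) : (a + b) ^ p ≤ 2 ^ (p - 1) * (a ^ p + b ^ p) := by
  lift a to NNReal using ha
  lift b to NNReal using hb
  exact_mod_cast NNReal.rpow_add_le_mul_rpow_add_rpow a b hp

lemma Real.le_rpow_add_one {x p : ℝ} (hx : 0 ≤ x) (hp : 1 ≤ p) : x ≤ x ^ p + 1 := by
  rcases le_total x 1 with h | h
  · linarith [rpow_nonneg hx p]
  · calc x = x ^ (1 : ℝ) := (rpow_one x).symm
      _ ≤ x ^ p := rpow_le_rpow_of_exponent_le h hp
      _ ≤ x ^ p + 1 := le_add_of_nonneg_right zero_le_one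

lemma Real.exp_neg_max_neg_log_le {x : ℝ} (hx : 0 < x) : exp (-max (-log x) 0) ≤ x := by
  calc exp (-max (-log x) 0) ≤ exp (log x) := exp_le_exp.2 (by linarith [le_max_left (-log x) 0])
    _ = x := exp_log hx

section Average

variable {α : Type*} [MeasurableSpace α] {μ : Measure α} [IsFiniteMeasure μ]

lemma MeasureTheory.Integrable.of_rpow {a : α → ℝ} (ham : AEStronglyMeasurable a μ)
    (ha : ∀ z, 0 ≤ a z) {p : ℝ} (hp : 1 ≤ p) (hap : Integrable (fun z => a z ^ p) μ) :
    Integrable a μ :=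
  (hap.add (integrable_const 1)).mono' ham <| ae_of_all _ fun z => by
    rw [norm_of_nonneg (ha z)]
    exact le_rpow_add_one (ha z) hp

lemma neg_log_average_le_average [NeZero μ] {G a : α → ℝ} (ha : Integrable a μ)
    (hG : Integrable G μ) (hGa : ∀ z, exp (-a z) ≤ G z) :
    -log (⨍ z, G z ∂μ) ≤ ⨍ z, a z ∂μ := by
  have hexp : Integrable (fun z => exp (-a z)) μ :=
    hG.mono' (continuous_exp.comp_aestronglyMeasurable ha.neg.aestronglyMeasurable)
      (ae_of_all _ fun z => by rw [norm_of_nonneg (exp_pos _).le]; exact hGa z)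
  have jensen : exp (⨍ z, -a z ∂μ) ≤ ⨍ z, exp (-a z) ∂μ :=
    convexOn_exp.map_average_le continuous_exp.continuousOn isClosed_univ
      (ae_of_all _ fun _ => mem_univ _) ha.neg hexp
  have hmono : ⨍ z, exp (-a z) ∂μ ≤ ⨍ z, G z ∂μ := by
    simp only [average_eq, smul_eq_mul]
    exact mul_le_mul_of_nonneg_left (integral_mono hexp hG hGa) (by positivity)
  rw [average_neg] at jensen
  have hpos : 0 < ⨍ z, G z ∂μ := (exp_pos _).trans_le (jensen.trans hmono)
  linarith [(le_log_iff_exp_le hpos).2 (jensen.trans hmono)]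

lemma ofReal_max_log_sub_log_lintegral_rpow_le [NeZero μ] (hμ1 : μ univ ≤ 1) {G a : α → ℝ}
    (hGm : Measurable G) (ham : Measurable a) (ha : ∀ z, 0 ≤ a z)
    (hGa : ∀ z, exp (-a z) ≤ G z) {p : ℝ} (hp : 1 ≤ p) :
    ENNReal.ofReal ((max (log (μ univ).toReal -
        log (∫⁻ z, ENNReal.ofReal (G z) ∂μ).toReal) 0) ^ p)
      ≤ (μ univ)⁻¹ * ∫⁻ z, ENNReal.ofReal (a z ^ p) ∂μ := by
  have hGpos : ∀ z, 0 < G z := fun z => (exp_pos _).trans_le (hGa z)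
  have hG0 : ∀ z, 0 ≤ G z := fun z => (hGpos z).le
  by_cases hΦ : ∫⁻ z, ENNReal.ofReal (G z) ∂μ = ∞
  · -- junk values: `∞.toReal = 0` and `log 0 = 0`, so the left side is
    -- `(max (log (μ univ).toReal) 0) ^ p = 0`
    have hlog : log (μ univ).toReal ≤ 0 :=
      log_nonpos ENNReal.toReal_nonneg (ENNReal.toReal_le_of_le_ofReal zero_le_one (by simpa))
    simp [hΦ, max_eq_right hlog, zero_rpow (by linarith : p ≠ 0)]
  by_cases hI : ∫⁻ z, ENNReal.ofReal (a z ^ p) ∂μ = ∞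
  · simp [hI, ENNReal.mul_top, measure_ne_top]
  have hGi : Integrable G μ :=
    ⟨hGm.aestronglyMeasurable, (hasFiniteIntegral_iff_ofReal (ae_of_all _ hG0)).2
      (lt_top_iff_ne_top.2 hΦ)⟩
  have hapi : Integrable (fun z => a z ^ p) μ :=
    ⟨(ham.pow_const p).aestronglyMeasurable, (hasFiniteIntegral_iff_ofReal
      (ae_of_all _ fun z => rpow_nonneg (ha z) p)).2 (lt_top_iff_ne_top.2 hI)⟩
  have hai : Integrable a μ := hapi.of_rpow ham.aestronglyMeasurable ha hp
  have hlog : log (μ univ).toReal - log (∫⁻ z, ENNReal.ofReal (G z) ∂μ).toReal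
      = -log (⨍ z, G z ∂μ) := by
    rw [average_eq, smul_eq_mul, ← integral_eq_lintegral_of_nonneg_ae (ae_of_all _ hG0)
      hGi.aestronglyMeasurable, log_mul, log_inv, measureReal_def]
    · ring
    · exact inv_ne_zero (measureReal_univ_pos.ne')
    · refine ((integral_pos_iff_support_of_nonneg hG0 hGi).2 ?_).ne'
      simpa [Function.support, (hGpos _).ne'] using NeZero.ne μ
  have havg : max (log (μ univ).toReal - log (∫⁻ z, ENNReal.ofReal (G z) ∂μ).toReal) 0
      ≤ ⨍ z, a z ∂μ := by
    refine max_le (hlog ▸ neg_log_average_le_average hai hGi hGa) ?_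
    rw [average_eq, smul_eq_mul]
    exact mul_nonneg (by positivity) (integral_nonneg ha)
  have jensen : (⨍ z, a z ∂μ) ^ p ≤ ⨍ z, a z ^ p ∂μ :=
    (convexOn_rpow hp).map_average_le (continuous_rpow_const (by linarith)).continuousOn
      isClosed_Ici (ae_of_all _ ha) hai hapi
  calc ENNReal.ofReal ((max (log (μ univ).toReal -
        log (∫⁻ z, ENNReal.ofReal (G z) ∂μ).toReal) 0) ^ p)
      ≤ ENNReal.ofReal (⨍ z, a z ^ p ∂μ) := ENNReal.ofReal_le_ofReal <|
        (rpow_le_rpow (le_max_right _ _) havg (by linarith)).trans jensen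
    _ = (μ univ)⁻¹ * ∫⁻ z, ENNReal.ofReal (a z ^ p) ∂μ := by
        rw [ofReal_average hapi (ae_of_all _ fun z => rpow_nonneg (ha z) p), ENNReal.div_eq_inv_mul]

end Average

lemma lintegral_compProd_kernel_restrict {X Y : Type*} [MeasurableSpace X] [MeasurableSpace Y]
    (ν : Measure X) [SFinite ν] (Q : Kernel X Y) [IsSFiniteKernel Q] {D : Set Y}
    (hD : MeasurableSet D) {F : X × Y → ℝ≥0∞} (hF : Measurable F) :
    ∫⁻ z, F z ∂(ν ⊗ₘ Q.restrict hD) = ∫⁻ x, ∫⁻ y in D, F (x, y) ∂(Q x) ∂ν := by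
  simp only [Measure.lintegral_compProd hF, Kernel.restrict_apply]

/-- inequality (24) of the paper: for a positive likelihood `g`, a set `D`
and `ν` with `νQ1_D > 0`, for any `p ≥ 1` and `(y₀,y₁)`,
`([log Φ_{ν,D}(y₀,y₁) − log(νQ1_D)]_-)^p ≤ 2^{p−1} (νQ1_D)⁻¹ ∬ ν(dx₀) Q(x₀,dx₁) 1_D(x₁)
[((log g(x₀,y₀))_-)^p + ((log g(x₁,y₁))_-)^p]`. -/
theorem forgetting_hmm_stmt13 {X Y : Type*} [MeasurableSpace X] [MeasurableSpace Y]
    (Q : Kernel X X) [IsMarkovKernel Q]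
    (g : X → Y → ℝ) (hgmeas : Measurable (Function.uncurry g)) (hgpos : ∀ x y, 0 < g x y)
    (D : Set X) (hD : MeasurableSet D)
    (ν : Measure X) [IsProbabilityMeasure ν]
    (hνQD : 0 < ∫⁻ x, Q x D ∂ν)
    (p : ℝ) (hp : 1 ≤ p) (y0 y1 : Y) :
    ENNReal.ofReal
        ((max (Real.log (∫⁻ x, Q x D ∂ν).toReal -
            Real.log (Phi Q g ν D y0 y1).toReal) 0) ^ p)
      ≤ ENNReal.ofReal (2 ^ (p - 1)) * (∫⁻ x, Q x D ∂ν)⁻¹ *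
          ∫⁻ x0, (∫⁻ x1 in D,
              ENNReal.ofReal ((max (-(Real.log (g x0 y0))) 0) ^ p +
                (max (-(Real.log (g x1 y1))) 0) ^ p) ∂(Q x0)) ∂ν := by
  set μ := ν ⊗ₘ Q.restrict hD
  set a : Y → X → ℝ := fun y x => max (-log (g x y)) 0
  have hgm : ∀ y, Measurable fun x => g x y := fun y =>
    hgmeas.comp (measurable_id.prodMk measurable_const)
  have ham : ∀ y, Measurable (a y) := fun y => ((hgm y).log.neg.max measurable_const)
  have hmass : μ univ = ∫⁻ x, Q x D ∂ν := by
    simpa using lintegral_compProd_kernel_restrict ν Q hD (F := 1) measurable_const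
  have hPhi : Phi Q g ν D y0 y1 = ∫⁻ z, ENNReal.ofReal (g z.1 y0 * g z.2 y1) ∂μ := by
    rw [lintegral_compProd_kernel_restrict ν Q hD (by fun_prop), Phi]
    refine lintegral_congr fun x0 => ?_
    rw [← lintegral_const_mul _ (hgm y1).ennreal_ofReal]
    simp only [ENNReal.ofReal_mul (hgpos x0 y0).le]
  have : NeZero μ := ⟨fun h => hνQD.ne (by simpa [h] using hmass)⟩
  have hμ1 : μ univ ≤ 1 := hmass ▸ (lintegral_mono fun x => prob_le_one).trans_eq (by simp)
  have hexp : ∀ z : X × X, exp (-(a y0 z.1 + a y1 z.2)) ≤ g z.1 y0 * g z.2 y1 := fun z => by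
    rw [neg_add, exp_add]
    exact mul_le_mul (exp_neg_max_neg_log_le (hgpos _ _)) (exp_neg_max_neg_log_le (hgpos _ _))
      (exp_pos _).le (hgpos _ _).le
  have key := ofReal_max_log_sub_log_lintegral_rpow_le hμ1 (by fun_prop) (by fun_prop)
    (fun z => add_nonneg (le_max_right _ _) (le_max_right _ _)) hexp hp
  rw [← hmass, hPhi]
  refine key.trans ?_
  rw [← lintegral_compProd_kernel_restrict ν Q hD
    (F := fun z => ENNReal.ofReal (a y0 z.1 ^ p + a y1 z.2 ^ p)) (by fun_prop),
    mul_comm (ENNReal.ofReal _), mul_assoc,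
    ← lintegral_const_mul (ENNReal.ofReal (2 ^ (p - 1))) (by fun_prop)]
  gcongr with z
  rw [← ENNReal.ofReal_mul (by positivity)]
  exact ENNReal.ofReal_le_ofReal (rpow_add_le_mul_rpow_add_rpow (le_max_right _ _)
    (le_max_right _ _) hp)
end

section
/- Let φ ∈ ℝ with |φ| < 1, σ > 0, c > 0, and let Q be the Gaussian autoregressive kernel on ℝ given by Q(x,·) = N(φx, σ²) (the Gaussian measure with mean φx and variance σ²). With V(x) := e^{c|x|}, the function QV(x) := ∫ e^{c|x'|} N(φx,σ²)(dx') is finite for every x, the ratio QV(x)/V(x) is bounded on bounded sets, and lim_{|x|→∞} QV(x)/V(x) = 0. -/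
open MeasureTheory ProbabilityTheory Real Filter
open scoped ENNReal NNReal

/-!
Shifting the mean and using `|x' + m| ≤ |x'| + |m|` gives `QV(x) ≤ K e^{c|φ x|}` with
`K = ∫ e^{c|y|} dN(0,σ²) < ∞` (Gaussian tails beat any exponential), so
`QV(x)/V(x) ≤ K e^{-c(1-|φ|)|x|}`, which is at most `K` and tends to `0`.
-/

lemma lintegral_exp_mul_abs_gaussianReal_ne_top (c m : ℝ) (v : ℝ≥0) :
    ∫⁻ x, ENNReal.ofReal (exp (c * |x|)) ∂gaussianReal m v ≠ ⊤ :=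
  (integrable_exp_mul_abs (integrable_exp_mul_gaussianReal c)
    (integrable_exp_mul_gaussianReal (-c))).lintegral_lt_top.ne

lemma lintegral_exp_mul_abs_gaussianReal_le {c : ℝ} (hc : 0 ≤ c) (m : ℝ) (v : ℝ≥0) :
    ∫⁻ x, ENNReal.ofReal (exp (c * |x|)) ∂gaussianReal m v ≤
      ENNReal.ofReal (exp (c * |m|)) *
        ∫⁻ y, ENNReal.ofReal (exp (c * |y|)) ∂gaussianReal 0 v := by
  rw [← zero_add m, ← gaussianReal_map_add_const, lintegral_map (by fun_prop) (by fun_prop),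
    ← lintegral_const_mul _ (by fun_prop)]
  refine lintegral_mono fun y => ?_
  rw [← ENNReal.ofReal_mul (exp_nonneg _), ← exp_add, zero_add]
  gcongr
  rw [← mul_add]
  exact mul_le_mul_of_nonneg_left ((abs_add_le y m).trans_eq (add_comm _ _)) hc

lemma lintegral_exp_mul_abs_gaussianReal_div_le {c : ℝ} (hc : 0 ≤ c) (φ x : ℝ) (v : ℝ≥0) :
    (∫⁻ x', ENNReal.ofReal (exp (c * |x'|)) ∂gaussianReal (φ * x) v) /
        ENNReal.ofReal (exp (c * |x|)) ≤
      (∫⁻ y, ENNReal.ofReal (exp (c * |y|)) ∂gaussianReal 0 v) *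
        ENNReal.ofReal (exp (-(c * (1 - |φ|) * |x|))) := by
  refine ENNReal.div_le_of_le_mul ?_
  have hexp : -(c * (1 - |φ|) * |x|) + c * |x| = c * |φ * x| := by rw [abs_mul]; ring
  rw [mul_assoc, ← ENNReal.ofReal_mul (exp_nonneg _), ← exp_add, hexp, mul_comm (∫⁻ _, _ ∂_)]
  exact lintegral_exp_mul_abs_gaussianReal_le hc (φ * x) v

theorem forgetting_hmm_stmt16_general (φ σ c : ℝ) (hφ : |φ| < 1) (hc : 0 < c) :
    (∀ x : ℝ,
      (∫⁻ x', ENNReal.ofReal (Real.exp (c * |x'|))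
          ∂(gaussianReal (φ * x) (Real.toNNReal (σ ^ 2)))) ≠ ⊤) ∧
    (∀ r : ℝ, ∃ B : ℝ≥0∞, B ≠ ⊤ ∧ ∀ x : ℝ, |x| ≤ r →
      (∫⁻ x', ENNReal.ofReal (Real.exp (c * |x'|))
          ∂(gaussianReal (φ * x) (Real.toNNReal (σ ^ 2)))) /
        ENNReal.ofReal (Real.exp (c * |x|)) ≤ B) ∧
    Filter.Tendsto
      (fun x : ℝ =>
        (∫⁻ x', ENNReal.ofReal (Real.exp (c * |x'|))
            ∂(gaussianReal (φ * x) (Real.toNNReal (σ ^ 2)))) /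
          ENNReal.ofReal (Real.exp (c * |x|)))
      (Bornology.cobounded ℝ) (nhds 0) := by
  set K := ∫⁻ y, ENNReal.ofReal (exp (c * |y|)) ∂gaussianReal 0 (σ ^ 2).toNNReal
  have hK : K ≠ ⊤ := lintegral_exp_mul_abs_gaussianReal_ne_top c 0 _
  have ha : 0 < c * (1 - |φ|) := mul_pos hc (sub_pos.mpr hφ)
  have hratio x := lintegral_exp_mul_abs_gaussianReal_div_le hc.le φ x (σ ^ 2).toNNReal
  refine ⟨fun x => lintegral_exp_mul_abs_gaussianReal_ne_top c _ _,
    fun _ => ⟨K, hK, fun x _ => (hratio x).trans ?_⟩, ?_⟩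
  · refine mul_le_of_le_one_right zero_le (ENNReal.ofReal_le_one.mpr (exp_le_one_iff.mpr ?_))
    exact neg_nonpos.mpr (mul_nonneg ha.le (abs_nonneg x))
  · have hdecay : Tendsto (fun x : ℝ => ENNReal.ofReal (exp (-(c * (1 - |φ|) * |x|))))
        (Bornology.cobounded ℝ) (nhds 0) := by
      rw [← ENNReal.ofReal_zero]
      refine ENNReal.tendsto_ofReal (tendsto_exp_neg_atTop_nhds_zero.comp ?_)
      exact (tendsto_norm_cobounded_atTop.const_mul_atTop ha).congr fun x => by rw [norm_eq_abs]
    have := ENNReal.Tendsto.const_mul hdecay (Or.inr hK)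
    rw [mul_zero] at this
    exact tendsto_of_tendsto_of_tendsto_of_le_of_le tendsto_const_nhds this (fun _ => zero_le)
      hratio

/-- For the Gaussian autoregressive kernel `Q(x,·) = N(φx, σ²)` with `|φ| < 1`,
`σ > 0`, and `V(x) = e^{c|x|}` with `c > 0`: `QV(x) = ∫ e^{c|x'|} N(φx,σ²)(dx')` is finite for
every `x`, the ratio `QV(x)/V(x)` is bounded on bounded sets, and `QV(x)/V(x) → 0` as `|x| → ∞`. -/
theorem forgetting_hmm_stmt16 (φ σ c : ℝ) (hφ : |φ| < 1) (hσ : 0 < σ) (hc : 0 < c) :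
    (∀ x : ℝ,
      (∫⁻ x', ENNReal.ofReal (Real.exp (c * |x'|))
          ∂(gaussianReal (φ * x) (Real.toNNReal (σ ^ 2)))) ≠ ⊤) ∧
    (∀ r : ℝ, ∃ B : ℝ≥0∞, B ≠ ⊤ ∧ ∀ x : ℝ, |x| ≤ r →
      (∫⁻ x', ENNReal.ofReal (Real.exp (c * |x'|))
          ∂(gaussianReal (φ * x) (Real.toNNReal (σ ^ 2)))) /
        ENNReal.ofReal (Real.exp (c * |x|)) ≤ B) ∧
    Filter.Tendsto
      (fun x : ℝ =>
        (∫⁻ x', ENNReal.ofReal (Real.exp (c * |x'|))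
            ∂(gaussianReal (φ * x) (Real.toNNReal (σ ^ 2)))) /
          ENNReal.ofReal (Real.exp (c * |x|)))
      (Bornology.cobounded ℝ) (nhds 0) :=
  forgetting_hmm_stmt16_general φ σ c hφ hc
end
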